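/- arXiv:0707.0479 — 8 statements merged into one kernel-verified Lean document; each statement's English description precedes it below -/
import Mathlib

section
/- Let X and S be finite sets. The polytope of joint probability distributions p on X^S (functions from S to X, i.e., tuples indexed by S) satisfying prescribed marginal distributions for each coordinate (i.e., for each s in S, the marginal of the s-th coordinate equals a given probability vector on X) is nonempty whenever the prescribed marginals are probability distributions, and every extreme point of this polytope has at most |X||S| - |S| + 1 nonzero entries. -/
/-!
If `p` is an extreme point of `{p ≥ 0, L p = b}` and `d ∈ ker L` is supported in `supp p`, then
`p ± ε d` stay in the polytope for small `ε > 0`, so `d = 0`. Hence `L` is injective on vectors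
supported in `supp p`, and `|supp p| ≤ rank L`. For the marginal map the rank is at most
`|S| (|X| - 1) + 1`: all marginals of `p` have the same total mass, so a marginal vector is
determined by its entries off one fixed `x₀` together with that mass. The product of the
prescribed marginals lies in the polytope.
-/

open Finset Module Function

section ExtremePoints

variable {𝕜 ι M : Type*} [Field 𝕜] [LinearOrder 𝕜] [IsStrictOrderedRing 𝕜] [Fintype ι]
  [AddCommGroup M] [Module 𝕜 M]

lemma exists_pos_mul_abs_le {p d : ι → 𝕜} (hp : ∀ i, 0 ≤ p i) (hd : support d ⊆ support p) :
    ∃ ε > 0, ∀ i, ε * |d i| ≤ p i := by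
  classical
  let ratio (i : ι) : {ε : 𝕜 // 0 < ε} :=
    if h : d i = 0 then ⟨1, one_pos⟩
    else ⟨p i / |d i|, div_pos ((hp i).lt_of_ne' (hd h)) (abs_pos.2 h)⟩
  obtain ⟨⟨ε, hε⟩, hle⟩ := Finite.exists_ge ratio
  refine ⟨ε, hε, fun i => ?_⟩
  by_cases h : d i = 0
  · simpa [h] using hp i
  · have : ε ≤ p i / |d i| := by simpa [ratio, h] using hle i
    exact (le_div_iff₀ (abs_pos.2 h)).1 this

lemma eq_zero_of_mem_extremePoints (L : (ι → 𝕜) →ₗ[𝕜] M) (b : M) {p d : ι → 𝕜}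
    (hp : p ∈ Set.extremePoints 𝕜 {p | (∀ i, 0 ≤ p i) ∧ L p = b}) (hd : L d = 0)
    (hsupp : support d ⊆ support p) : d = 0 := by
  obtain ⟨⟨hp0, hpb⟩, hext⟩ := hp
  obtain ⟨ε, hε, hεd⟩ := exists_pos_mul_abs_le hp0 hsupp
  have mem (c : 𝕜) (hc : |c| ≤ ε) : p + c • d ∈ {p | (∀ i, 0 ≤ p i) ∧ L p = b} := by
    refine ⟨fun i => ?_, by simp [hpb, hd]⟩
    have hcd : |c * d i| ≤ ε * |d i| := abs_mul c (d i) ▸ by gcongr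
    simp only [Pi.add_apply, Pi.smul_apply, smul_eq_mul]
    linarith [hεd i, neg_abs_le (c * d i)]
  have hseg : p ∈ openSegment 𝕜 (p + (-ε) • d) (p + ε • d) := by
    convert midpoint_mem_openSegment (𝕜 := 𝕜) (p + (-ε) • d) (p + ε • d)
    rw [neg_smul, ← sub_eq_add_neg, midpoint_sub_add]
  have hleft := hext (mem (-ε) (by simp [abs_of_pos hε])) (mem ε (by simp [abs_of_pos hε])) hseg
  simpa [hε.ne'] using hleft

theorem ncard_support_le_finrank_range_of_mem_extremePoints (L : (ι → 𝕜) →ₗ[𝕜] M) (b : M)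
    {p : ι → 𝕜} (hp : p ∈ Set.extremePoints 𝕜 {p | (∀ i, 0 ≤ p i) ∧ L p = b}) :
    (support p).ncard ≤ finrank 𝕜 (LinearMap.range L) := by
  classical
  let T := (support p).toFinset
  let extend := ExtendByZero.linearMap 𝕜 (Subtype.val : T → ι)
  have hinj : Injective (L ∘ₗ extend) := by
    refine (injective_iff_map_eq_zero _).2 fun d hd => ?_
    have hsupp : support (extend d) ⊆ support p := by
      intro i hi
      by_contra h
      exact hi (extend_apply' _ _ _ fun ⟨j, hj⟩ => h (hj ▸ Set.mem_toFinset.1 j.2))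
    funext j
    simpa [extend, Subtype.val_injective.extend_apply] using
      congrFun (eq_zero_of_mem_extremePoints L b hp hd hsupp) j
  calc (support p).ncard
      = finrank 𝕜 (T → 𝕜) := by
        rw [finrank_fintype_fun_eq_card, Fintype.card_coe, Set.ncard_eq_toFinset_card']
    _ = finrank 𝕜 (LinearMap.range (L ∘ₗ extend)) := (LinearMap.finrank_range_of_inj hinj).symm
    _ ≤ finrank 𝕜 (LinearMap.range L) := Submodule.finrank_mono (LinearMap.range_comp_le_range _ _)

end ExtremePoints

section Marginals

variable {R X S : Type*} [Fintype X] [Fintype S] [DecidableEq X] [DecidableEq S]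

variable (R X S) in
def marginals [CommSemiring R] : ((S → X) → R) →ₗ[R] S → X → R where
  toFun p s x := ∑ t ∈ univ.filter (fun t : S → X => t s = x), p t
  map_add' p p' := by ext; simp [sum_add_distrib]
  map_smul' c p := by ext; simp [mul_sum]

lemma marginals_apply [CommSemiring R] (p : (S → X) → R) (s : S) (x : X) :
    marginals R X S p s x = ∑ t ∈ univ.filter (fun t : S → X => t s = x), p t := rfl

lemma sum_marginals_apply [CommSemiring R] (p : (S → X) → R) (s : S) :
    ∑ x, marginals R X S p s x = ∑ t, p t :=
  sum_fiberwise _ _ _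

lemma marginals_prod [CommSemiring R] {q : S → X → R} (hq : ∀ s, ∑ x, q s x = 1) :
    marginals R X S (fun t => ∏ s, q s (t s)) = q := by
  ext s x
  let g := update q s (Pi.single x (q s x))
  have hg (t : S → X) : ∏ s', g s' (t s') = if t s = x then ∏ s', q s' (t s') else 0 := by
    split_ifs with h
    · refine prod_congr rfl fun s' _ => ?_
      rcases eq_or_ne s' s with rfl | hs
      · simp [g, h]
      · simp [g, hs]
    · exact prod_eq_zero (mem_univ s) (by simp [g, h])
  calc marginals R X S (fun t => ∏ s, q s (t s)) s x
      = ∑ t : S → X, ∏ s', g s' (t s') := by simp only [hg, marginals_apply, sum_filter]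
    _ = ∏ s', ∑ y, g s' y := (Fintype.prod_sum g).symm
    _ = q s x := by
      rw [Fintype.prod_eq_single s fun s' hs' => by simpa [g, hs'] using hq s']
      simp [g]

lemma finrank_range_marginals_le [Field R] :
    finrank R (LinearMap.range (marginals R X S)) ≤
      Fintype.card X * Fintype.card S - Fintype.card S + 1 := by
  have hdom : finrank R (LinearMap.range (marginals R X S)) ≤ Fintype.card (S → X) :=
    (marginals R X S).finrank_range_le.trans_eq (finrank_fintype_fun_eq_card R)
  rcases isEmpty_or_nonempty S with hS | ⟨⟨s₀⟩⟩
  · simpa using hdom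
  rcases isEmpty_or_nonempty X with hX | ⟨⟨x₀⟩⟩
  · rw [Fintype.card_eq_zero_iff.2 ⟨fun t => isEmptyElim (t s₀)⟩] at hdom
    omega
  let restrict : (S → X → R) →ₗ[R] ((S × {x // x ≠ x₀}) → R) × R :=
    { toFun m := (fun r => m r.1 r.2, ∑ x, m s₀ x)
      map_add' m m' := by ext <;> simp [sum_add_distrib]
      map_smul' c m := by ext <;> simp [mul_sum] }
  have hinj : Injective (restrict ∘ₗ (LinearMap.range (marginals R X S)).subtype) := by
    refine (injective_iff_map_eq_zero _).2 ?_
    rintro ⟨_, p, rfl⟩ hm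
    obtain ⟨hne, hsum⟩ : (∀ s x, x ≠ x₀ → marginals R X S p s x = 0) ∧
        ∑ x, marginals R X S p s₀ x = 0 := by
      simpa [restrict, Prod.ext_iff, funext_iff] using hm
    ext s x
    rcases eq_or_ne x x₀ with rfl | hx
    · calc marginals R X S p s x = ∑ y, marginals R X S p s y :=
            (sum_eq_single x (fun y _ hy => hne s y hy) (by simp)).symm
        _ = 0 := by rw [sum_marginals_apply, ← sum_marginals_apply p s₀, hsum]
    · exact hne s x hx
  calc finrank R (LinearMap.range (marginals R X S))
      ≤ finrank R (((S × {x // x ≠ x₀}) → R) × R) := LinearMap.finrank_le_finrank_of_injective hinj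
    _ = Fintype.card X * Fintype.card S - Fintype.card S + 1 := by
      simp [Fintype.card_subtype_compl, Nat.mul_sub_one, mul_comm]

end Marginals

/-- The polytope of joint distributions on `S → X` with prescribed
coordinate marginals `q s` is nonempty when each `q s` is a probability vector, and
every extreme point has at most `|X||S| - |S| + 1` nonzero entries. -/
theorem stmt_0 {X S : Type*} [Fintype X] [Fintype S] [DecidableEq X] [DecidableEq S]
    (q : S → X → ℝ) (hq0 : ∀ s x, 0 ≤ q s x) (hq1 : ∀ s, ∑ x, q s x = 1) :
    let P : Set ((S → X) → ℝ) :=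
      {p | (∀ t, 0 ≤ p t) ∧
        ∀ s x, ∑ t ∈ Finset.univ.filter (fun t : S → X => t s = x), p t = q s x}
    P.Nonempty ∧
      ∀ p ∈ Set.extremePoints ℝ P,
        (Function.support p).ncard ≤
          Fintype.card X * Fintype.card S - Fintype.card S + 1 := by
  intro P
  have hP : P = {p | (∀ t, 0 ≤ p t) ∧ marginals ℝ X S p = q} := by
    simp only [P, funext_iff, marginals_apply]
  rw [hP]
  refine ⟨⟨_, fun t => prod_nonneg fun s _ => hq0 s (t s), marginals_prod hq1⟩, fun p hp => ?_⟩
  exact (ncard_support_le_finrank_range_of_mem_extremePoints _ q hp).trans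
    finrank_range_marginals_le
end

section
/- For a state-dependent discrete memoryless channel with finite input alphabet X, finite state alphabet S, finite output alphabet Y, and transition probabilities p(y|x,s), with i.i.d. states known causally at the encoder, the Shannon capacity C = max_T I(T;Y) (where T ranges over distributions on X^S, the input alphabet of the associated channel) is achieved by a distribution on X^S whose support has size at most |X||S| - |S| + 1. -/
/-!
A maximizer `π₀` of the continuous function `assocMI` exists on the compact simplex. `H(Y)` depends
on `π` only through the output distribution `∑ π t • assocChan t`, and `H(Y|T)` is linear in `π`.
Each `assocChan t` is the image, under one linear map, of the indicator of `t` in `S → X → ℝ`,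
whose rows all sum to `1`; hence the outputs span an affine space of dimension at most
`|S|(|X| - 1)`. While the support of `π₀` has more points than that plus one, the outputs on it
are affinely dependent; moving `π₀` along the dependence, in the direction that does not increase
`H(Y|T)`, keeps `H(Y)` fixed and removes a support point.
-/

open Finset

/-- Shannon entropy of a (sub)probability vector on a finite alphabet. -/
noncomputable def discEntropy {Y : Type*} [Fintype Y] (f : Y → ℝ) : ℝ :=
  ∑ y, Real.negMulLog (f y)

/-- Likelihood of the associated channel: output pmf given input `t : S → X`. -/
noncomputable def assocChan {X S Y : Type*} [Fintype S]
    (W : Y → X → S → ℝ) (pS : S → ℝ) (t : S → X) (y : Y) : ℝ :=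
  ∑ s, pS s * W y (t s) s

/-- Mutual information `I(T;Y) = H(Y) - H(Y|T)` for input distribution `π` on `S → X`. -/
noncomputable def assocMI {X S Y : Type*} [Fintype X] [Fintype S] [Fintype Y]
    [DecidableEq S] (W : Y → X → S → ℝ) (pS : S → ℝ) (π : (S → X) → ℝ) : ℝ :=
  discEntropy (fun y => ∑ t : S → X, π t * assocChan W pS t y) -
    ∑ t : S → X, π t * discEntropy (assocChan W pS t)

open Module

section AffineDependence

variable {k ι E : Type*} [Field k] [AddCommGroup E] [Module k E]

theorem Finset.sum_univ_dite_mem {M : Type*} [Fintype ι] [DecidableEq ι] [AddCommMonoid M]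
    (T : Finset ι) (g : T → M) : ∑ i, (if h : i ∈ T then g ⟨i, h⟩ else 0) = ∑ j, g j := by
  rw [← sum_subset (subset_univ T) (fun i _ hi => dif_neg hi), ← sum_attach T]
  exact sum_congr rfl fun j _ => dif_pos j.2

theorem exists_affine_dependence_of_finrank_vectorSpan_lt [Fintype ι] (v : ι → E) {T : Finset ι}
    (hT : finrank k (vectorSpan k (Set.range v)) + 1 < #T) :
    ∃ e : ι → k, e ≠ 0 ∧ (∀ i ∉ T, e i = 0) ∧ ∑ i, e i = 0 ∧ ∑ i, e i • v i = 0 := by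
  classical
  have hdep : ¬AffineIndependent k (fun i : T => v i) := fun h => by
    have hspan : vectorSpan k (Set.range fun i : T => v i) ≤ vectorSpan k (Set.range v) :=
      vectorSpan_mono k (Set.range_comp_subset_range _ v)
    have := h.card_le_finrank_succ.trans (Nat.add_le_add_right (Submodule.finrank_mono hspan) 1)
    simp only [Fintype.card_coe] at this
    omega
  simp only [affineIndependent_iff_of_fintype, not_forall] at hdep
  obtain ⟨w, hw, hwv, j, hj⟩ := hdep
  refine ⟨fun i => if h : i ∈ T then w ⟨i, h⟩ else 0, fun he => hj ?_, fun i hi => dif_neg hi,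
    by rw [sum_univ_dite_mem T w, hw], ?_⟩
  · simpa using congrFun he j
  · simp only [dite_smul, zero_smul]
    rw [sum_univ_dite_mem T (fun j => w j • v j), ← weightedVSub_eq_linear_combination _ hw, hwv]

end AffineDependence

section SupportReduction

variable {k ι E : Type*} [Field k] [LinearOrder k] [IsStrictOrderedRing k] [Fintype ι]

theorem exists_nonneg_add_mul_support_ncard_lt {π e : ι → k} (hπ : ∀ i, 0 ≤ π i) (he : e ≠ 0)
    (hsum : ∑ i, e i = 0) (hsupp : ∀ i, π i = 0 → e i = 0) :
    ∃ t : k, 0 ≤ t ∧ (∀ i, 0 ≤ π i + t * e i) ∧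
      (Function.support fun i => π i + t * e i).ncard < (Function.support π).ncard := by
  classical
  obtain ⟨j, hj⟩ : ∃ j, e j < 0 := by
    by_contra! hnonneg
    exact he (funext fun i => (sum_eq_zero_iff_of_nonneg fun i _ => hnonneg i).mp hsum i
      (mem_univ i))
  obtain ⟨j₀, hj₀, hmin⟩ := ({i | e i < 0} : Finset ι).exists_min_image (fun i => π i / -e i)
    ⟨j, by simpa using hj⟩
  simp only [mem_filter, mem_univ, true_and] at hj₀ hmin
  set t := π j₀ / -e j₀
  have ht : 0 ≤ t := div_nonneg (hπ j₀) (by linarith)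
  have hsub : (Function.support fun i => π i + t * e i) ⊆ Function.support π :=
    fun i hi hπi => hi (by simp [hπi, hsupp i hπi])
  refine ⟨t, ht, fun i => ?_, Set.ncard_lt_ncard ?_ (Set.toFinite _)⟩
  · rcases le_or_gt 0 (e i) with hi | hi
    · nlinarith [hπ i]
    · have := (le_div_iff₀ (neg_pos.mpr hi)).mp (hmin i hi)
      linarith
  refine (Set.ssubset_iff_of_subset hsub).mpr ⟨j₀, fun hπj₀ => hj₀.ne (hsupp j₀ hπj₀), ?_⟩
  simp only [t, Function.mem_support, not_not]
  field_simp [hj₀.ne]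
  ring

variable [AddCommGroup E] [Module k E]

theorem exists_nonneg_weights_support_ncard_le_finrank_vectorSpan (v : ι → E) (c : ι → k)
    {π : ι → k} (hπ : ∀ i, 0 ≤ π i) :
    ∃ π' : ι → k, (∀ i, 0 ≤ π' i) ∧ ∑ i, π' i = ∑ i, π i ∧
      ∑ i, π' i • v i = ∑ i, π i • v i ∧ ∑ i, π' i * c i ≤ ∑ i, π i * c i ∧
      (Function.support π').ncard ≤ finrank k (vectorSpan k (Set.range v)) + 1 := by
  classical
  induction hn : (Function.support π).ncard using Nat.strong_induction_on generalizing π with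
  | _ n ih =>
  by_cases hsmall : n ≤ finrank k (vectorSpan k (Set.range v)) + 1
  · exact ⟨π, hπ, rfl, rfl, le_rfl, hn ▸ hsmall⟩
  obtain ⟨e, he0, heπ, hesum, hev⟩ := exists_affine_dependence_of_finrank_vectorSpan_lt (k := k) v
    (T := (Function.support π).toFinset) (by rw [← Set.ncard_eq_toFinset_card']; omega)
  simp only [Set.mem_toFinset, Function.mem_support, not_not] at heπ
  obtain ⟨d, hd0, hdπ, hdsum, hdv, hdc⟩ : ∃ d : ι → k, d ≠ 0 ∧ (∀ i, π i = 0 → d i = 0) ∧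
      ∑ i, d i = 0 ∧ ∑ i, d i • v i = 0 ∧ ∑ i, d i * c i ≤ 0 := by
    rcases le_total (∑ i, e i * c i) 0 with h | h
    · exact ⟨e, he0, heπ, hesum, hev, h⟩
    · refine ⟨-e, neg_ne_zero.mpr he0, fun i hi => by simp [heπ i hi], ?_, ?_, ?_⟩
      · simp [hesum]
      · simp [hev]
      · simpa using h
  obtain ⟨t, ht0, hnonneg, hlt⟩ := exists_nonneg_add_mul_support_ncard_lt hπ hd0 hdsum hdπ
  obtain ⟨π', hπ'0, hmass, hmoment, hcost, hcard⟩ := ih _ (hn ▸ hlt) hnonneg rfl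
  refine ⟨π', hπ'0, hmass.trans ?_, hmoment.trans ?_, hcost.trans ?_, hcard⟩
  · simp [sum_add_distrib, ← mul_sum, hdsum]
  · simp [add_smul, sum_add_distrib, mul_smul, ← smul_sum, hdv]
  · simp only [add_mul, sum_add_distrib, mul_assoc, ← mul_sum]
    nlinarith [mul_nonpos_of_nonneg_of_nonpos ht0 hdc]

end SupportReduction

section AssociatedChannel

variable {X S Y : Type*} [Fintype X]

def coordIndicator [DecidableEq X] (t : S → X) : S → X → ℝ := fun s x => if t s = x then 1 else 0

def rowSum : (S → X → ℝ) →ₗ[ℝ] (S → ℝ) where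
  toFun m s := ∑ x, m s x
  map_add' m m' := by ext; simp [sum_add_distrib]
  map_smul' r m := by ext; simp [mul_sum]

theorem rowSum_coordIndicator [DecidableEq X] (t : S → X) : rowSum (coordIndicator t) = 1 := by
  ext s; simp [rowSum, coordIndicator]

theorem rowSum_surjective [Nonempty X] : Function.Surjective (rowSum (S := S) (X := X)) := by
  classical
  intro r
  refine ⟨fun s => Pi.single (Classical.arbitrary X) (r s), funext fun s => ?_⟩
  simp [rowSum]

variable [Fintype S]

theorem finrank_ker_rowSum [Nonempty X] :
    finrank ℝ (LinearMap.ker (rowSum (S := S) (X := X))) =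
      Fintype.card X * Fintype.card S - Fintype.card S := by
  have := LinearMap.finrank_range_add_finrank_ker (rowSum (S := S) (X := X))
  rw [LinearMap.range_eq_top.mpr rowSum_surjective, finrank_top] at this
  simp only [Module.finrank_pi_fintype, finrank_self, sum_const, card_univ, smul_eq_mul,
    mul_one] at this
  rw [mul_comm]
  omega

theorem finrank_vectorSpan_range_coordIndicator_le [DecidableEq X] [Nonempty X] :
    finrank ℝ (vectorSpan ℝ (Set.range (coordIndicator (S := S) (X := X)))) ≤
      Fintype.card X * Fintype.card S - Fintype.card S := by
  rw [← finrank_ker_rowSum]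
  refine Submodule.finrank_mono ?_
  rw [vectorSpan_def, Submodule.span_le]
  rintro _ ⟨_, ⟨t, rfl⟩, _, ⟨t', rfl⟩, rfl⟩
  simp [rowSum_coordIndicator]

def outputOfMarginals (W : Y → X → S → ℝ) (pS : S → ℝ) : (S → X → ℝ) →ₗ[ℝ] (Y → ℝ) where
  toFun m y := ∑ s, pS s * ∑ x, m s x * W y x s
  map_add' m m' := by ext; simp [add_mul, sum_add_distrib, mul_add]
  map_smul' r m := by ext; simp [mul_sum, mul_assoc, mul_left_comm]

theorem outputOfMarginals_coordIndicator [DecidableEq X] (W : Y → X → S → ℝ) (pS : S → ℝ)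
    (t : S → X) : outputOfMarginals W pS (coordIndicator t) = assocChan W pS t := by
  ext y; simp [outputOfMarginals, coordIndicator, assocChan]

theorem finrank_vectorSpan_range_assocChan_le [Nonempty X] (W : Y → X → S → ℝ) (pS : S → ℝ) :
    finrank ℝ (vectorSpan ℝ (Set.range (assocChan W pS))) ≤
      Fintype.card X * Fintype.card S - Fintype.card S := by
  classical
  have hrange : Set.range (assocChan W pS) =
      (outputOfMarginals W pS).toAffineMap '' Set.range coordIndicator := by
    rw [← Set.range_comp]
    exact congrArg Set.range (funext fun t => (outputOfMarginals_coordIndicator W pS t).symm)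
  rw [hrange, ← AffineMap.map_vectorSpan]
  exact (Submodule.finrank_map_le _ _).trans finrank_vectorSpan_range_coordIndicator_le

end AssociatedChannel

section MutualInformation

variable {X S Y : Type*} [Fintype X] [Fintype S] [Fintype Y] [DecidableEq S]

theorem continuous_assocMI (W : Y → X → S → ℝ) (pS : S → ℝ) : Continuous (assocMI W pS) := by
  unfold assocMI discEntropy
  fun_prop

theorem assocMI_eq_sub (W : Y → X → S → ℝ) (pS : S → ℝ) (π : (S → X) → ℝ) :
    assocMI W pS π = discEntropy (∑ t, π t • assocChan W pS t) -
      ∑ t, π t * discEntropy (assocChan W pS t) := by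
  simp only [assocMI, sum_fn, Pi.smul_apply, smul_eq_mul]

end MutualInformation

theorem stmt_1_general {X S Y : Type*} [Fintype X] [Fintype S] [Fintype Y]
    [DecidableEq S] [Nonempty X]
    (W : Y → X → S → ℝ)
    (pS : S → ℝ) :
    ∃ π : (S → X) → ℝ, (∀ t, 0 ≤ π t) ∧ (∑ t, π t = 1) ∧
      (∀ π' : (S → X) → ℝ, (∀ t, 0 ≤ π' t) → (∑ t, π' t = 1) →
        assocMI W pS π' ≤ assocMI W pS π) ∧
      (Function.support π).ncard ≤
        Fintype.card X * Fintype.card S - Fintype.card S + 1 := by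
  classical
  obtain ⟨π₀, ⟨hπ₀0, hπ₀1⟩, hmax⟩ := (isCompact_stdSimplex ℝ (S → X)).exists_isMaxOn
    ⟨_, single_mem_stdSimplex ℝ (Classical.arbitrary (S → X))⟩
    (continuous_assocMI W pS).continuousOn
  obtain ⟨π, hπ0, hmass, houtput, hcond, hcard⟩ :=
    exists_nonneg_weights_support_ncard_le_finrank_vectorSpan (assocChan W pS)
      (fun t => discEntropy (assocChan W pS t)) hπ₀0
  refine ⟨π, hπ0, hmass.trans hπ₀1, fun π' hπ'0 hπ'1 => (hmax ⟨hπ'0, hπ'1⟩).trans ?_,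
    hcard.trans (Nat.add_le_add_right (finrank_vectorSpan_range_assocChan_le W pS) 1)⟩
  rw [assocMI_eq_sub, assocMI_eq_sub, houtput]
  exact sub_le_sub_left hcond _

/-- For an SD-DMC with i.i.d. states known causally at the encoder, the
capacity `max_T I(T;Y)` of Shannon's associated channel (input alphabet `S → X`) is
achieved by an input distribution whose support has size at most
`|X||S| - |S| + 1`. -/
theorem stmt_1 {X S Y : Type*} [Fintype X] [Fintype S] [Fintype Y]
    [DecidableEq S] [Nonempty X]
    (W : Y → X → S → ℝ) (hW0 : ∀ y x s, 0 ≤ W y x s) (hW1 : ∀ x s, ∑ y, W y x s = 1)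
    (pS : S → ℝ) (hpS0 : ∀ s, 0 ≤ pS s) (hpS1 : ∑ s, pS s = 1) :
    ∃ π : (S → X) → ℝ, (∀ t, 0 ≤ π t) ∧ (∑ t, π t = 1) ∧
      (∀ π' : (S → X) → ℝ, (∀ t, 0 ≤ π' t) → (∑ t, π' t = 1) →
        assocMI W pS π' ≤ assocMI W pS π) ∧
      (Function.support π).ncard ≤
        Fintype.card X * Fintype.card S - Fintype.card S + 1 :=
  stmt_1_general W pS
end

section
/- Let x_1 < x_2 < ... < x_M be real numbers forming an arithmetic progression, and let s_1 < s_2 < ... < s_Q be arbitrary real numbers. Then there exist M functions f_1, ..., f_M from {1,...,Q} to {x_1,...,x_M} such that the M multisets {f_i(q) + s_q : q = 1,...,Q} (each of size Q, counted with multiplicity) are pairwise disjoint. -/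
/-!
Write `x k = c + k d`. Choose `f_i(q) ≡ i - ⌊s_q / d⌋ (mod M)`. Then
`(x (f_i q) + s_q - c) / d = f_i(q) + s_q / d` has integer part
`f_i(q) + ⌊s_q / d⌋ ≡ i (mod M)`, so the residue mod `M` of `⌊(v - c) / d⌋` recovers `i`
from every value `v` of the `i`-th multiset, and different `i` give disjoint multisets.
-/

namespace Fin

def subIntMod {M : ℕ} (i : Fin M) (n : ℤ) : Fin M :=
  ⟨((i - n) % M).toNat, by
    have hM : (0 : ℤ) < M := by exact_mod_cast i.pos
    have := Int.emod_nonneg ((i : ℤ) - n) hM.ne'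
    have := Int.emod_lt_of_pos ((i : ℤ) - n) hM
    omega⟩

theorem coe_subIntMod {M : ℕ} (i : Fin M) (n : ℤ) :
    ((i.subIntMod n : ℕ) : ℤ) = (i - n) % M :=
  Int.toNat_of_nonneg (Int.emod_nonneg _ (by exact_mod_cast i.pos.ne'))

theorem subIntMod_add_emod {M : ℕ} (i : Fin M) (n : ℤ) :
    ((i.subIntMod n : ℤ) + n) % M = i := by
  rw [coe_subIntMod, Int.emod_add_emod, sub_add_cancel]
  exact Int.emod_eq_of_lt (by positivity) (by exact_mod_cast i.isLt)

end Fin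

section ArithmeticProgression

variable {M : ℕ} {x : Fin M → ℝ} {c d : ℝ}

theorem floor_sub_div_emod_subIntMod (hd : d ≠ 0) (hx : ∀ k, x k = c + k * d)
    (i : Fin M) (t : ℝ) :
    ⌊(x (i.subIntMod ⌊t / d⌋) + t - c) / d⌋ % M = i := by
  have hval : (x (i.subIntMod ⌊t / d⌋) + t - c) / d =
      ((i.subIntMod ⌊t / d⌋ : ℕ) : ℤ) + t / d := by
    rw [hx]
    field_simp
    push_cast
    ring
  rw [hval, Int.floor_intCast_add, Fin.subIntMod_add_emod]

theorem disjoint_map_add_subIntMod {ι : Type*} (hd : d ≠ 0) (hx : ∀ k, x k = c + k * d)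
    (s : ι → ℝ) (m : Multiset ι) {i j : Fin M} (hij : i ≠ j) :
    Disjoint (m.map fun q => x (i.subIntMod ⌊s q / d⌋) + s q)
      (m.map fun q => x (j.subIntMod ⌊s q / d⌋) + s q) := by
  refine Multiset.disjoint_map_map.2 fun q _ q' _ heq => hij (Fin.ext ?_)
  have := congrArg (fun v => ⌊(v - c) / d⌋ % M) heq
  simp only [floor_sub_div_emod_subIntMod hd hx] at this
  exact_mod_cast this

end ArithmeticProgression

theorem stmt_2_general {M Q : ℕ} (x : Fin M → ℝ) (d : ℝ) (hd : 0 < d)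
    (hAP : ∀ i j : Fin M, x j - x i = (((j : ℕ) : ℝ) - ((i : ℕ) : ℝ)) * d)
    (s : Fin Q → ℝ) :
    ∃ f : Fin M → Fin Q → Fin M,
      ∀ i j : Fin M, i ≠ j →
        Disjoint
          (Multiset.map (fun q => x (f i q) + s q) Finset.univ.val)
          (Multiset.map (fun q => x (f j q) + s q) Finset.univ.val) := by
  obtain ⟨c, hx⟩ : ∃ c, ∀ k : Fin M, x k = c + k * d := by
    rcases isEmpty_or_nonempty (Fin M) with hM | ⟨⟨i⟩⟩
    · exact ⟨0, hM.elim⟩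
    · exact ⟨x i - i * d, fun k => by linarith [hAP i k]⟩
  exact ⟨fun i q => i.subIntMod ⌊s q / d⌋, fun i j =>
    disjoint_map_add_subIntMod hd.ne' hx s _⟩

/-- If `x_1 < ... < x_M` form an arithmetic progression of reals and
`s_1 < ... < s_Q` are arbitrary reals, then there exist `M` functions
`f_1, ..., f_M : {1,...,Q} → {x_1,...,x_M}` whose output multisets
`{f_i(q) + s_q : q}` are pairwise disjoint. -/
theorem stmt_2 {M Q : ℕ} (x : Fin M → ℝ) (d : ℝ) (hd : 0 < d)
    (hAP : ∀ i j : Fin M, x j - x i = (((j : ℕ) : ℝ) - ((i : ℕ) : ℝ)) * d)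
    (s : Fin Q → ℝ) (hs : StrictMono s) :
    ∃ f : Fin M → Fin Q → Fin M,
      ∀ i j : Fin M, i ≠ j →
        Disjoint
          (Multiset.map (fun q => x (f i q) + s q) Finset.univ.val)
          (Multiset.map (fun q => x (f j q) + s q) Finset.univ.val) :=
  stmt_2_general x d hd hAP s
end

section
/- Let x_1 < ... < x_M form an arithmetic progression of reals and s_1 < ... < s_Q be reals. The M pairwise-disjoint multisets in the previous construction can be chosen so that for each q in {1,...,Q}, the values f_1(q), f_2(q), ..., f_M(q) are a permutation of x_1, ..., x_M. -/
open Finset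

/-! Write `s q = d (g q + r q)` with `g q = ⌊s q / d⌋` and `0 ≤ r q < 1`. Then
`x k + s q = x 0 + d (k + g q + r q)`, so the value `x k + s q` determines the integer
`k + g q`. Choosing `f i q ≡ i - g q (mod M)` makes `i` the residue of that integer,
so values coming from different `i` never coincide, and for fixed `q` the map
`i ↦ i - g q` is a translation of `ℤ/Mℤ`, hence a bijection. -/

lemma Int.floor_natCast_mul_add_div {d : ℝ} (hd : 0 < d) (k : ℕ) (s : ℝ) :
    ⌊(k * d + s) / d⌋ = ⌊s / d⌋ + k := by
  rw [← Int.floor_add_natCast]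
  congr 1
  field_simp
  ring

lemma floor_add_eq_of_arithProg_add_eq {M : ℕ} {x : Fin M → ℝ} {d : ℝ} (hd : 0 < d)
    (hAP : ∀ i j : Fin M, x j - x i = (((j : ℕ) : ℝ) - ((i : ℕ) : ℝ)) * d)
    {k k' : Fin M} {s s' : ℝ} (h : x k + s = x k' + s') :
    ⌊s / d⌋ + (k : ℕ) = ⌊s' / d⌋ + (k' : ℕ) := by
  rw [← Int.floor_natCast_mul_add_div hd, ← Int.floor_natCast_mul_add_div hd]
  congr 2
  linarith [hAP k k']

section

open Fin.CommRing

lemma Fin.intCast_add_eq_of_arithProg_add_eq {M : ℕ} [NeZero M] {x : Fin M → ℝ} {d : ℝ}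
    (hd : 0 < d) (hAP : ∀ i j : Fin M, x j - x i = (((j : ℕ) : ℝ) - ((i : ℕ) : ℝ)) * d)
    {k k' : Fin M} {s s' : ℝ} (h : x k + s = x k' + s') :
    (⌊s / d⌋ : Fin M) + k = (⌊s' / d⌋ : Fin M) + k' := by
  simpa using congrArg (Int.cast : ℤ → Fin M) (floor_add_eq_of_arithProg_add_eq hd hAP h)

end

theorem stmt_3_general {M Q : ℕ} (x : Fin M → ℝ) (d : ℝ) (hd : 0 < d)
    (hAP : ∀ i j : Fin M, x j - x i = (((j : ℕ) : ℝ) - ((i : ℕ) : ℝ)) * d)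
    (s : Fin Q → ℝ) :
    ∃ f : Fin M → Fin Q → Fin M,
      (∀ i j : Fin M, i ≠ j →
        Disjoint
          (Multiset.map (fun q => x (f i q) + s q) Finset.univ.val)
          (Multiset.map (fun q => x (f j q) + s q) Finset.univ.val)) ∧
      (∀ q : Fin Q, Function.Bijective (fun i : Fin M => f i q)) := by
  rcases M.eq_zero_or_pos with rfl | hM
  · exact ⟨fun i => i.elim0, fun i => i.elim0, fun _ => ⟨fun i => i.elim0, fun i => i.elim0⟩⟩
  have : NeZero M := ⟨hM.ne'⟩
  open Fin.CommRing in
  refine ⟨fun i q => i - (⌊s q / d⌋ : Fin M), fun i j hij => ?_,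
    fun q => (Equiv.subRight _).bijective⟩
  rw [Multiset.disjoint_map_map]
  intro q _ q' _ heq
  exact hij <| by
    simpa only [add_sub_cancel] using Fin.intCast_add_eq_of_arithProg_add_eq hd hAP heq

/-- The `M` pairwise-disjoint output multisets of Statement 2 can be
chosen so that, for each fixed `q`, the values `f_1(q), ..., f_M(q)` form a
permutation of `x_1, ..., x_M` (i.e. `i ↦ f i q` is a bijection). -/
theorem stmt_3 {M Q : ℕ} (x : Fin M → ℝ) (d : ℝ) (hd : 0 < d)
    (hAP : ∀ i j : Fin M, x j - x i = (((j : ℕ) : ℝ) - ((i : ℕ) : ℝ)) * d)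
    (s : Fin Q → ℝ) (hs : StrictMono s) :
    ∃ f : Fin M → Fin Q → Fin M,
      (∀ i j : Fin M, i ≠ j →
        Disjoint
          (Multiset.map (fun q => x (f i q) + s q) Finset.univ.val)
          (Multiset.map (fun q => x (f j q) + s q) Finset.univ.val)) ∧
      (∀ q : Fin Q, Function.Bijective (fun i : Fin M => f i q)) :=
  stmt_3_general x d hd hAP s
end

section
/- Consider the noise-free channel Y = X + S with input alphabet X = {x_1,...,x_M} ⊂ ℝ whose elements form an arithmetic progression, and interference alphabet S = {s_1,...,s_Q} ⊂ ℝ with i.i.d. interference known causally at the encoder. Then M distinct messages can be transmitted with zero error in a single channel use; i.e., there exist M functions f_1,...,f_M : S → X such that the decoder can recover i from any value f_i(s) + s, s ∈ S. -/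
/-!
Write the inputs as `x k = x 0 + k d`. For an output `y = x k + s` the integer part of
`(y - x 0) / d` is `k + ⌊s / d⌋`, so if the encoder sends `k ≡ i - ⌊s / d⌋ (mod M)`,
the decoder recovers `i` as that integer part modulo `M`.
-/

-- Makes `Fin (m + 1)` the ring `ℤ ⧸ (m + 1)`, so residues mod `M` are read off by `Int.cast`.
open Fin.CommRing

variable {K : Type*} [Field K] [LinearOrder K] [IsStrictOrderedRing K] [FloorRing K]

theorem floor_intCast_mul_add_div {d : K} (hd : d ≠ 0) (k : ℤ) (t : K) :
    ⌊(k * d + t) / d⌋ = k + ⌊t / d⌋ := by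
  rw [add_div, mul_div_cancel_right₀ _ hd, Int.floor_intCast_add]

section ArithmeticProgression

variable {m : ℕ}

def apEncode (d s : K) (i : Fin (m + 1)) : Fin (m + 1) :=
  i - (⌊s / d⌋ : Fin (m + 1))

def apDecode (x : Fin (m + 1) → K) (d y : K) : Fin (m + 1) :=
  (⌊(y - x 0) / d⌋ : Fin (m + 1))

theorem apDecode_add {x : Fin (m + 1) → K} {d : K} (hd : d ≠ 0)
    (hAP : ∀ i j : Fin (m + 1), x j - x i = (((j : ℕ) : K) - ((i : ℕ) : K)) * d)
    (k : Fin (m + 1)) (s : K) :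
    apDecode x d (x k + s) = k + (⌊s / d⌋ : Fin (m + 1)) := by
  have hk : x k + s - x 0 = (((k : ℕ) : ℤ) : K) * d + s := by
    have := hAP 0 k
    rw [Fin.val_zero, Nat.cast_zero, sub_zero] at this
    push_cast
    linarith
  rw [apDecode, hk, floor_intCast_mul_add_div hd, Int.cast_add, Int.cast_natCast,
    Fin.cast_val_eq_self]

theorem apDecode_apEncode {x : Fin (m + 1) → K} {d : K} (hd : d ≠ 0)
    (hAP : ∀ i j : Fin (m + 1), x j - x i = (((j : ℕ) : K) - ((i : ℕ) : K)) * d)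
    (i : Fin (m + 1)) (s : K) :
    apDecode x d (x (apEncode d s i) + s) = i := by
  rw [apDecode_add hd hAP, apEncode, sub_add_cancel]

end ArithmeticProgression

theorem stmt_4_general {M Q : ℕ} (x : Fin M → ℝ) (d : ℝ) (hd : 0 < d)
    (hAP : ∀ i j : Fin M, x j - x i = (((j : ℕ) : ℝ) - ((i : ℕ) : ℝ)) * d)
    (s : Fin Q → ℝ) :
    ∃ f : Fin M → Fin Q → Fin M,
      ∀ i j : Fin M, ∀ q q' : Fin Q,
        x (f i q) + s q = x (f j q') + s q' → i = j := by
  cases M with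
  | zero => exact ⟨fun i => i.elim0, fun i => i.elim0⟩
  | succ m =>
    refine ⟨fun i q => apEncode d (s q) i, fun i j q q' h => ?_⟩
    rw [← apDecode_apEncode hd.ne' hAP i (s q), h, apDecode_apEncode hd.ne' hAP]

/-- For the noise-free channel `Y = X + S` with input alphabet an
arithmetic progression `x_1 < ... < x_M` and interference alphabet
`s_1 < ... < s_Q` known causally at the encoder, `M` messages can be sent with
zero error in one channel use: there are encoding functions `f_i` such that the
message `i` is recoverable from any output `x_{f_i(q)} + s_q`. -/
theorem stmt_4 {M Q : ℕ} (x : Fin M → ℝ) (d : ℝ) (hd : 0 < d)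
    (hAP : ∀ i j : Fin M, x j - x i = (((j : ℕ) : ℝ) - ((i : ℕ) : ℝ)) * d)
    (s : Fin Q → ℝ) (hs : StrictMono s) :
    ∃ f : Fin M → Fin Q → Fin M,
      ∀ i j : Fin M, ∀ q q' : Fin Q,
        x (f i q) + s q = x (f j q') + s q' → i = j :=
  stmt_4_general x d hd hAP s
end

section
/- For Q = 2 interference levels, M zero-error one-shot codes exist without any arithmetic-progression assumption: for any reals x_1 < ... < x_M and any two reals s_1 < s_2, there exist M functions f_1,...,f_M : {1,2} → {x_1,...,x_M} such that the multisets {f_i(1)+s_1, f_i(2)+s_2} for i = 1,...,M are pairwise disjoint. -/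
/-!
Put `d = s₂ - s₁` and use the codewords `f i = (i, σ i)` for a permutation `σ`. Distinct
codewords can only collide across the two levels, i.e. when `x i = x (σ j) + d` with `i ≠ j`.
The relation `x j = x k + d` is a partial matching of the indices, since `x` is injective, and
any partial matching of a finite set extends to a permutation; taking `σ` to be such an
extension, `x i = x (σ j) + d` forces `σ i = σ j`, hence `i = j`.
-/

open Function Equiv

theorem Equiv.Perm.exists_apply_eq_of_add_eq {ι G : Type*} [Finite ι] [Add G]
    [IsRightCancelAdd G] {x : ι → G} (hx : Injective x) (d : G) :
    ∃ σ : Perm ι, ∀ j k, x j = x k + d → σ j = k := by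
  let pairs := {p : ι × ι // x p.1 = x p.2 + d}
  have hfst : Injective fun p : pairs => p.1.1 := fun p q (h : p.1.1 = q.1.1) =>
    Subtype.ext <| Prod.ext h <| hx <| add_right_cancel <| by rw [← p.2, ← q.2, h]
  have hsnd : Injective fun p : pairs => p.1.2 := fun p q (h : p.1.2 = q.1.2) =>
    Subtype.ext <| Prod.ext (hx <| by rw [p.2, q.2, h]) h
  obtain ⟨σ, hσ⟩ := Perm.exists_extending_pair _ _ hfst hsnd
  exact ⟨σ, fun j k hjk => hσ ⟨(j, k), hjk⟩⟩

theorem Equiv.Perm.exists_eq_of_add_eq {ι G : Type*} [Finite ι] [Add G]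
    [IsRightCancelAdd G] {x : ι → G} (hx : Injective x) (d : G) :
    ∃ σ : Perm ι, ∀ i j, x i = x (σ j) + d → i = j := by
  obtain ⟨σ, hσ⟩ := Perm.exists_apply_eq_of_add_eq hx d
  exact ⟨σ, fun i j h => σ.injective (hσ i (σ j) h)⟩

theorem stmt_5_general {M : ℕ} (x : Fin M → ℝ) (hx : StrictMono x)
    (s : Fin 2 → ℝ) :
    ∃ f : Fin M → Fin 2 → Fin M,
      ∀ i j : Fin M, i ≠ j →
        Disjoint
          ({x (f i 0) + s 0, x (f i 1) + s 1} : Multiset ℝ)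
          ({x (f j 0) + s 0, x (f j 1) + s 1} : Multiset ℝ) := by
  obtain ⟨σ, hσ⟩ := Perm.exists_eq_of_add_eq hx.injective (s 1 - s 0)
  refine ⟨fun i => ![i, σ i], fun i j hij => ?_⟩
  simp only [Matrix.cons_val_zero, Matrix.cons_val_one, Multiset.insert_eq_cons,
    Multiset.disjoint_cons_left, Multiset.singleton_disjoint, Multiset.mem_cons,
    Multiset.mem_singleton, add_left_inj, hx.injective.eq_iff, σ.injective.eq_iff]
  have hij' : x i + s 0 ≠ x (σ j) + s 1 := fun h => hij (hσ i j (by linarith))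
  have hji' : x (σ i) + s 1 ≠ x j + s 0 := fun h => hij (hσ j i (by linarith)).symm
  tauto

/-- For `Q = 2` interference levels, zero-error one-shot codes of `M`
messages exist without any arithmetic-progression assumption: for any
`x_1 < ... < x_M` and `s_1 < s_2` there are `M` functions `f_i : {1,2} → X` whose
output multisets `{f_i(1)+s_1, f_i(2)+s_2}` are pairwise disjoint. -/
theorem stmt_5 {M : ℕ} (x : Fin M → ℝ) (hx : StrictMono x)
    (s : Fin 2 → ℝ) (hs : s 0 < s 1) :
    ∃ f : Fin M → Fin 2 → Fin M,
      ∀ i j : Fin M, i ≠ j →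
        Disjoint
          ({x (f i 0) + s 0, x (f i 1) + s 1} : Multiset ℝ)
          ({x (f j 0) + s 0, x (f j 1) + s 1} : Multiset ℝ) :=
  stmt_5_general x hx s
end

section
/- Let A be the MQ × M^Q zero-one matrix whose rows are indexed by pairs (q, i) ∈ {1,...,Q} × {1,...,M} and columns by tuples t ∈ {1,...,M}^Q, with A[(q,i), t] = 1 iff t(q) = i. Then the rank of A is MQ - Q + 1. -/
/-!
The rows of block `q` sum to the all-ones vector, so fixing a symbol `a₀`, the row space is
spanned by the all-ones vector and the rows `(q, a)` with `a ≠ a₀`: `1 + Q (M - 1)` vectors.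
They are independent: evaluating at the tuple that is `a₀` everywhere except `a` at position `q`
picks out exactly the row `(q, a)`, and the all-ones vector is the only one not vanishing at the
constant tuple `a₀`.
-/

open Submodule

def marginalMatrix (K ι α : Type*) [Zero K] [One K] [DecidableEq α] :
    Matrix (ι × α) (ι → α) K :=
  Matrix.of fun r t => if t r.1 = r.2 then 1 else 0

namespace marginalMatrix

variable {K ι α : Type*} [Field K] [DecidableEq α]

theorem sum_rows [Fintype α] (q : ι) : ∑ a, marginalMatrix K ι α (q, a) = 1 := by
  ext t
  simp [marginalMatrix]

def reducedRows (a₀ : α) : Option (ι × {a // a ≠ a₀}) → (ι → α) → K :=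
  fun o => Option.casesOn' o 1 fun p => marginalMatrix K ι α (p.1, p.2)

theorem span_range_reducedRows [Fintype α] [Nonempty ι] (a₀ : α) :
    span K (Set.range (reducedRows (K := K) a₀)) =
      span K (Set.range (marginalMatrix K ι α)) := by
  apply le_antisymm
  all_goals rw [span_le]
  · rintro _ ⟨_ | p, rfl⟩
    · obtain ⟨q⟩ := ‹Nonempty ι›
      rw [reducedRows, Option.casesOn'_none, ← sum_rows q]
      exact sum_mem fun a _ => subset_span ⟨(q, a), rfl⟩
    · exact subset_span ⟨(p.1, p.2), rfl⟩
  · rintro _ ⟨⟨q, a⟩, rfl⟩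
    by_cases ha : a = a₀
    · subst ha
      have hrow : marginalMatrix K ι α (q, a) =
          reducedRows a none - ∑ b : {b // b ≠ a}, reducedRows a (some (q, b)) := by
        rw [eq_sub_iff_add_eq, reducedRows, Option.casesOn'_none, ← sum_rows q,
          Fintype.sum_eq_add_sum_subtype_ne _ a]
        rfl
      rw [hrow]
      exact sub_mem (subset_span ⟨none, rfl⟩)
        (sum_mem fun b _ => subset_span ⟨some (q, b), rfl⟩)
    · exact subset_span ⟨some (q, ⟨a, ha⟩), rfl⟩

def evalAtUpdates [DecidableEq ι] (a₀ : α) : ((ι → α) → K) →ₗ[K] (ι × {a // a ≠ a₀} → K) :=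
  LinearMap.funLeft K K fun p => Function.update (fun _ => a₀) p.1 p.2.1

theorem evalAtUpdates_row [DecidableEq ι] (a₀ : α) (p : ι × {a // a ≠ a₀}) :
    evalAtUpdates a₀ (marginalMatrix K ι α (p.1, p.2)) = Pi.single p 1 := by
  ext ⟨q, b, hb⟩
  obtain ⟨q', b', hb'⟩ := p
  rcases eq_or_ne q q' with rfl | hq
  · simp [evalAtUpdates, marginalMatrix, Pi.single_apply, eq_comm]
  · simp [evalAtUpdates, marginalMatrix, hq, hq.symm, Ne.symm hb']

theorem linearIndependent_reducedRows [DecidableEq ι] (a₀ : α) :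
    LinearIndependent K (reducedRows (K := K) (ι := ι) a₀) := by
  refine linearIndependent_option'.mpr ⟨?_, ?_⟩
  · refine LinearIndependent.of_comp (evalAtUpdates a₀) ?_
    convert Pi.linearIndependent_single_one (ι × {a // a ≠ a₀}) K using 1
    ext1 p
    exact evalAtUpdates_row a₀ p
  · -- every row `(q, a)` with `a ≠ a₀` vanishes at the constant tuple `a₀`
    intro h
    have hle : span K (Set.range fun p : ι × {a // a ≠ a₀} => marginalMatrix K ι α (p.1, p.2)) ≤
        LinearMap.ker (LinearMap.proj (R := K) (φ := fun _ : ι → α => K) fun _ => a₀) := by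
      rw [span_le]
      rintro _ ⟨p, rfl⟩
      simp [marginalMatrix, Ne.symm p.2.2]
    simpa using hle h

theorem rank_eq [Fintype ι] [DecidableEq ι] [Fintype α] [Nonempty ι] [Nonempty α] :
    (marginalMatrix K ι α).rank = Fintype.card ι * (Fintype.card α - 1) + 1 := by
  obtain ⟨a₀⟩ := ‹Nonempty α›
  rw [Matrix.rank_eq_finrank_span_row, Matrix.row, ← span_range_reducedRows a₀,
    finrank_span_eq_card (linearIndependent_reducedRows a₀)]
  simp [Fintype.card_subtype_compl]

end marginalMatrix

/-- The `MQ × M^Q` zero-one matrix `A` with rows indexed by pairs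
`(q,i)` and columns by tuples `t : Fin Q → Fin M`, where `A[(q,i),t] = 1` iff
`t q = i`, has rank `MQ - Q + 1`. -/
theorem stmt_11 {M Q : ℕ} (hM : 0 < M) (hQ : 0 < Q) :
    (Matrix.of (fun (r : Fin Q × Fin M) (t : Fin Q → Fin M) =>
      if t r.1 = r.2 then (1 : ℝ) else 0)).rank = M * Q - Q + 1 := by
  have : Nonempty (Fin M) := Fin.pos_iff_nonempty.mp hM
  have : Nonempty (Fin Q) := Fin.pos_iff_nonempty.mp hQ
  have hrank := marginalMatrix.rank_eq (K := ℝ) (ι := Fin Q) (α := Fin M)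
  rw [Fintype.card_fin, Fintype.card_fin, Nat.mul_sub_one, mul_comm] at hrank
  exact hrank
end

section
/- In the inductive construction of disjoint multisets for the noise-free channel: let s_1 < ... < s_{q+1} be reals and x_1 < ... < x_M an arithmetic progression, with Y^{(j)} = {x_1 + s_j, ..., x_M + s_j}. If some element of Y^{(q+1)} lies in Y^{(1)} ∪ ... ∪ Y^{(q)}, and x_k + s_{q+1} is the largest such element, then there exists a unique j ∈ {1,...,q} such that {x_1 + s_{q+1}, ..., x_k + s_{q+1}} ⊆ Y^{(j)}. -/
/-!
Write `x_i = x_1 + (i - 1) d`. An equality `x_n + s_j = x_k + s_{q+1}` with `s_j < s_{q+1}` forces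
`n > k`, and it can be shifted along the progression: `x_{n-t} + s_j = x_{k-t} + s_{q+1}` for
`t < k`, and `x_{n+1} + s_j = x_{k+1} + s_{q+1}` if `n < M`. Maximality of `k` rules out the latter,
so every witness is `x_M`; hence the shift `s_j = x_k - x_M + s_{q+1}` is determined, giving
uniqueness, and the downward shifts give the containment.
-/

def IsArithProg {M : ℕ} (x : Fin M → ℝ) (d : ℝ) : Prop :=
  ∀ i j : Fin M, x j - x i = (((j : ℕ) : ℝ) - ((i : ℕ) : ℝ)) * d

namespace IsArithProg

variable {M : ℕ} {x : Fin M → ℝ} {d a b : ℝ}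

theorem sub_eq_sub (hx : IsArithProg x d) {i j i' j' : Fin M}
    (h : (j : ℕ) + (i' : ℕ) = (j' : ℕ) + (i : ℕ)) : x j - x i = x j' - x i' := by
  have h' : ((j : ℕ) : ℝ) + (i' : ℕ) = (j' : ℕ) + (i : ℕ) := by exact_mod_cast h
  rw [hx, hx]
  congr 1
  linarith

theorem lt_of_add_eq_add (hx : IsArithProg x d) (hd : 0 < d) (hab : a < b) {i j : Fin M}
    (h : x j + a = x i + b) : i < j := by
  have hpos : 0 < (((j : ℕ) : ℝ) - (i : ℕ)) * d := by rw [← hx]; linarith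
  have := pos_of_mul_pos_left hpos hd.le
  exact Fin.lt_def.mpr (by exact_mod_cast sub_pos.mp this)

theorem add_mem_range_of_le (hx : IsArithProg x d) {k n : Fin M} (hkn : k ≤ n)
    (h : x n + a = x k + b) {i : Fin M} (hik : i ≤ k) :
    x i + b ∈ Set.range (fun m : Fin M => x m + a) := by
  have hm : (n : ℕ) - ((k : ℕ) - i) < M := by omega
  refine ⟨⟨(n : ℕ) - ((k : ℕ) - i), hm⟩, ?_⟩
  have := hx.sub_eq_sub (i := i) (j := ⟨(n : ℕ) - ((k : ℕ) - i), hm⟩) (i' := k) (j' := n)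
    (by simp only; rw [Fin.le_def] at hkn hik; omega)
  simp only
  linarith

theorem val_add_one_eq_of_forall_le (hx : IsArithProg x d) (hd : 0 < d) (hab : a < b)
    {k n : Fin M} (h : x n + a = x k + b)
    (hmax : ∀ i n' : Fin M, x n' + a = x i + b → i ≤ k) : (n : ℕ) + 1 = M := by
  have hkn := hx.lt_of_add_eq_add hd hab h
  by_contra hne
  have hn : (n : ℕ) + 1 < M := by omega
  have hk : (k : ℕ) + 1 < M := by rw [Fin.lt_def] at hkn; omega
  have hshift := hx.sub_eq_sub (i := ⟨(k : ℕ) + 1, hk⟩) (j := ⟨(n : ℕ) + 1, hn⟩) (i' := k) (j' := n)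
    (by simp only; omega)
  have := hmax ⟨(k : ℕ) + 1, hk⟩ ⟨(n : ℕ) + 1, hn⟩ (by linarith)
  rw [Fin.le_def] at this
  simp only at this
  omega

end IsArithProg

/-- Inductive step of the disjoint-multiset construction. With
`x_1 < ... < x_M` an arithmetic progression, `s : Fin (Q+1) → ℝ` strictly
increasing, and `Y^{(j)} = {x_i + s j}`, if some element of `Y^{(Q+1)}` lies in
`Y^{(1)} ∪ ... ∪ Y^{(Q)}` and `x_k + s_{Q+1}` is the largest such element, then
there is a unique `j ≤ Q` with `{x_1 + s_{Q+1}, ..., x_k + s_{Q+1}} ⊆ Y^{(j)}`. -/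
theorem stmt_15 {M Q : ℕ} (x : Fin M → ℝ) (d : ℝ) (hd : 0 < d)
    (hAP : ∀ i j : Fin M, x j - x i = (((j : ℕ) : ℝ) - ((i : ℕ) : ℝ)) * d)
    (s : Fin (Q + 1) → ℝ) (hs : StrictMono s)
    (k : Fin M)
    (hmem : x k + s (Fin.last Q) ∈
      ⋃ j : Fin Q, Set.range (fun i : Fin M => x i + s j.castSucc))
    (hmax : ∀ i : Fin M,
      (x i + s (Fin.last Q) ∈
        ⋃ j : Fin Q, Set.range (fun i' : Fin M => x i' + s j.castSucc)) → i ≤ k) :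
    ∃! j : Fin Q, ∀ i : Fin M, i ≤ k →
      x i + s (Fin.last Q) ∈ Set.range (fun i' : Fin M => x i' + s j.castSucc) := by
  have hx : IsArithProg x d := hAP
  have hlt (j : Fin Q) : s j.castSucc < s (Fin.last Q) := hs (Fin.castSucc_lt_last j)
  have hlast (j : Fin Q) (n : Fin M) (h : x n + s j.castSucc = x k + s (Fin.last Q)) :
      (n : ℕ) + 1 = M :=
    hx.val_add_one_eq_of_forall_le hd (hlt j) h
      fun i n' h' => hmax i (Set.mem_iUnion.mpr ⟨j, n', h'⟩)
  obtain ⟨j, n, hn⟩ := Set.mem_iUnion.mp hmem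
  refine ⟨j, fun i hik => hx.add_mem_range_of_le (hx.lt_of_add_eq_add hd (hlt j) hn).le hn hik,
    fun j' hj' => ?_⟩
  obtain ⟨n', hn'⟩ := hj' k le_rfl
  obtain rfl : n' = n := Fin.ext (by have := hlast j n hn; have := hlast j' n' hn'; omega)
  exact Fin.castSucc_injective _ (hs.injective (by simp only at hn hn'; linarith))
end
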